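/- arXiv:2003.06173 — 2 statements merged into one kernel-verified Lean document; each statement's English description precedes it below -/
import Mathlib

section
/- (Invariance of a top exterior vector under so(p,q).) Let V be a finite-dimensional real vector space with finrank ℝ V = n, let B : V →ₗ[ℝ] V →ₗ[ℝ] ℝ be a symmetric nondegenerate bilinear form, and let f : V →ₗ[ℝ] V satisfy B (f x) y = −B x (f y) for all x, y ∈ V (f is B-skew-adjoint). Then for every family v : Fin n → V one has ∑_{i : Fin n} (v 0 ∧ ⋯ ∧ f(v i) ∧ ⋯ ∧ v (n−1)) = 0 in ⋀ⁿ V. -/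
open Module

/-- The wedge `v 0 ∧ ⋯ ∧ v (n−1)` of a family of vectors, as an element of the `n`-th
exterior power `⋀[R]^n M` (the analogue of `exteriorPower.ιMulti`). -/
noncomputable def wedgeι (R : Type*) [CommRing R] (n : ℕ) {M : Type*} [AddCommGroup M]
    [Module R M] (v : Fin n → M) : ⋀[R]^n M :=
  ⟨ExteriorAlgebra.ιMulti R n v, ExteriorAlgebra.ιMulti_range R n (Set.mem_range_self v)⟩

/-! `v ↦ ∑ i, g (v 0, …, f (v i), …)` is again alternating, and on a basis it visibly equals
`trace f • g`; hence it is `trace f • g`. If `f` is skew-adjoint for a nondegenerate form `B`,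
then `B : V ≃ V*` conjugates `f` to `-fᵀ`, so `trace f = -trace f = 0`. -/

open Function

lemma Function.update_comp_swap_of_eq {ι β : Type*} [DecidableEq ι] (v : ι → β) {a b : ι}
    (hv : v a = v b) (x : β) : update v a x ∘ Equiv.swap a b = update v b x := by
  have hswap : v ∘ Equiv.swap a b = v := by
    ext j
    simp only [comp_apply, Equiv.swap_apply_def]
    split_ifs <;> simp_all
  rw [update_comp_equiv, Equiv.symm_swap, Equiv.swap_apply_left, hswap]

section Derivation

variable {R M N ι : Type*} [CommSemiring R] [AddCommMonoid M] [Module R M] [Fintype ι]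
  [DecidableEq ι]

def MultilinearMap.derivation [AddCommMonoid N] [Module R N]
    (g : MultilinearMap R (fun _ : ι => M) N) (f : M →ₗ[R] M) :
    MultilinearMap R (fun _ : ι => M) N :=
  ∑ i, g.compLinearMap (update (fun _ => LinearMap.id) i f)

theorem MultilinearMap.derivation_apply [AddCommMonoid N] [Module R N]
    (g : MultilinearMap R (fun _ : ι => M) N) (f : M →ₗ[R] M) (v : ι → M) :
    g.derivation f v = ∑ i, g (update v i (f (v i))) := by
  simp only [derivation, sum_apply, compLinearMap_apply]
  congr! with i - j
  rcases eq_or_ne j i with rfl | h <;> simp [*]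

namespace AlternatingMap

variable [AddCommGroup N] [Module R N]

def derivation (g : M [⋀^ι]→ₗ[R] N) (f : M →ₗ[R] M) : M [⋀^ι]→ₗ[R] N where
  toMultilinearMap := g.toMultilinearMap.derivation f
  map_eq_zero_of_eq' v a b hv hab := by
    rw [MultilinearMap.toFun_eq_coe, MultilinearMap.derivation_apply]
    change ∑ i, g (update v i (f (v i))) = 0
    -- only the terms at `a` and `b` survive, and they differ by the transposition `(a b)`
    rw [Fintype.sum_eq_add a b hab fun i hi => g.map_eq_zero_of_eq _
        (by rw [update_of_ne hi.1.symm, update_of_ne hi.2.symm, hv]) hab,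
      ← update_comp_swap_of_eq v hv, g.map_swap _ hab, hv, add_neg_cancel]

theorem derivation_apply (g : M [⋀^ι]→ₗ[R] N) (f : M →ₗ[R] M) (v : ι → M) :
    g.derivation f v = ∑ i, g (update v i (f (v i))) :=
  g.toMultilinearMap.derivation_apply f v

theorem derivation_apply_basis (g : M [⋀^ι]→ₗ[R] N) (f : M →ₗ[R] M) (e : Basis ι R M) :
    g.derivation f e = LinearMap.trace R M f • g e := by
  rw [LinearMap.trace_eq_matrix_trace R e, Matrix.trace, Finset.sum_smul, derivation_apply]
  refine Finset.sum_congr rfl fun i _ => ?_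
  conv_lhs => rw [← e.sum_repr (f (e i)), g.map_update_sum]
  rw [Finset.sum_eq_single i (fun j _ hji => ?_) (by simp), g.map_update_smul, update_eq_self,
    Matrix.diag_apply, LinearMap.toMatrix_apply]
  rw [g.map_update_smul, g.map_eq_zero_of_eq _ (by rw [update_self, update_of_ne hji]) hji.symm,
    smul_zero]

theorem derivation_eq_trace_smul (g : M [⋀^ι]→ₗ[R] N) (f : M →ₗ[R] M)
    (e : Basis ι R M) : g.derivation f = LinearMap.trace R M f • g := by
  refine Basis.ext_alternating e fun u hu => ?_
  let σ : Equiv.Perm ι := Equiv.ofBijective u (Finite.injective_iff_bijective.1 hu)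
  change g.derivation f (e ∘ σ) = (LinearMap.trace R M f • g) (e ∘ σ)
  rw [map_perm, map_perm, derivation_apply_basis, smul_apply, smul_comm]

end AlternatingMap

end Derivation

theorem LinearMap.trace_eq_zero_of_isSkewAdjoint {K V : Type*} [Field K] (hK : ringChar K ≠ 2)
    [AddCommGroup V] [Module K V] [FiniteDimensional K V] {B : V →ₗ[K] V →ₗ[K] K}
    (hB : B.SeparatingLeft) {f : V →ₗ[K] V} (hf : B.IsSkewAdjoint f) : trace K V f = 0 := by
  let φ : V ≃ₗ[K] Dual K V := B.linearEquivOfInjective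
    (ker_eq_bot.1 (separatingLeft_iff_ker_eq_bot.1 hB)) Subspace.dual_finrank_eq.symm
  have hconj : φ.conj f = Dual.transpose (-f) := by
    ext ψ x
    obtain ⟨y, rfl⟩ := φ.surjective ψ
    simp only [LinearEquiv.conj_apply, comp_apply, LinearEquiv.coe_coe,
      LinearEquiv.symm_apply_apply, Dual.transpose_apply]
    exact hf y x
  have htrace := trace_conj' f φ
  rw [hconj, trace_transpose', map_neg] at htrace
  exact (Ring.eq_self_iff_eq_zero_of_char_ne_two hK).1 htrace

theorem sum_wedge_update_skewAdjoint_eq_zero_general (V : Type*) [AddCommGroup V] [Module ℝ V]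
    [FiniteDimensional ℝ V] (n : ℕ) (hn : finrank ℝ V = n)
    (B : V →ₗ[ℝ] V →ₗ[ℝ] ℝ)
    (hnd : ∀ x, (∀ y, B x y = 0) → x = 0)
    (f : V →ₗ[ℝ] V) (hskew : ∀ x y, B (f x) y = -(B x (f y)))
    (v : Fin n → V) :
    (∑ i : Fin n, wedgeι ℝ n (Function.update v i (f (v i)))) = 0 := by
  have htrace : LinearMap.trace ℝ V f = 0 :=
    LinearMap.trace_eq_zero_of_isSkewAdjoint (by simp [ringChar.eq_zero]) hnd
      fun x y => by simp [hskew]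
  calc ∑ i, wedgeι ℝ n (update v i (f (v i)))
      = (exteriorPower.ιMulti ℝ n).derivation f v :=
        ((exteriorPower.ιMulti ℝ n).derivation_apply f v).symm
    _ = (LinearMap.trace ℝ V f • exteriorPower.ιMulti ℝ n) v := by
      rw [AlternatingMap.derivation_eq_trace_smul _ f (finBasisOfFinrankEq ℝ V hn)]
    _ = 0 := by rw [htrace, zero_smul, AlternatingMap.zero_apply]

/-- Invariance of a top exterior vector under `so(p,q)`: if `f` is skew-adjoint with respect
to a symmetric nondegenerate bilinear form `B` on an `n`-dimensional space `V`, then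
`∑ i, v 0 ∧ ⋯ ∧ f (v i) ∧ ⋯ ∧ v (n−1) = 0` in `⋀ⁿ V`. -/
theorem sum_wedge_update_skewAdjoint_eq_zero (V : Type*) [AddCommGroup V] [Module ℝ V]
    [FiniteDimensional ℝ V] (n : ℕ) (hn : finrank ℝ V = n)
    (B : V →ₗ[ℝ] V →ₗ[ℝ] ℝ) (hsymm : ∀ x y, B x y = B y x)
    (hnd : ∀ x, (∀ y, B x y = 0) → x = 0)
    (f : V →ₗ[ℝ] V) (hskew : ∀ x y, B (f x) y = -(B x (f y)))
    (v : Fin n → V) :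
    (∑ i : Fin n, wedgeι ℝ n (Function.update v i (f (v i)))) = 0 :=
  sum_wedge_update_skewAdjoint_eq_zero_general V n hn B hnd f hskew v
end

section
/- Fix Λ ∈ ℝ, let η = diag(−1,1,1), ε the Levi-Civita symbol on Fin 3, and on pairs (v, A) (v : Fin 3 → ℝ, A a 3×3 real matrix) define the bracket ⟦(v,A),(w,B)⟧ := (A·η·w − B·η·v, A·η·B − B·η·A + Λ·(vecMulVec v w − vecMulVec w v)) and the symmetric bilinear pairing ⟨(v,A),(w,B)⟩ := ∑_{a,b,c ∈ Fin 3} ε a b c · (A a b · w c + B a b · v c). Then the pairing is invariant: for all X, Y, Z whose matrix components are antisymmetric, ⟨⟦X,Y⟧, Z⟩ = ⟨X, ⟦Y,Z⟧⟩. -/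
/-- The Levi-Civita symbol on `Fin 3`: it equals the sign of the permutation sending
`(0,1,2)` to `(a,b,c)` when `a`, `b`, `c` are pairwise distinct, and `0` otherwise.
This closed polynomial formula realises exactly that prescription. -/
noncomputable def levicivita (a b c : Fin 3) : ℝ :=
  ((((b : ℤ) - (a : ℤ)) * ((c : ℤ) - (a : ℤ)) * ((c : ℤ) - (b : ℤ))) : ℤ) / 2

/-- The three-dimensional Minkowski metric `η = diag(−1,1,1)`. -/
noncomputable def minkowski3 : Matrix (Fin 3) (Fin 3) ℝ :=
  Matrix.diagonal ![(-1 : ℝ), 1, 1]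

/-- The bracket, depending on the cosmological constant `Λ`, on pairs `(v, A)` of a vector
`v : Fin 3 → ℝ` and a `3×3` real matrix `A`:
`⟦(v,A),(w,B)⟧ = (A·η·w − B·η·v, A·η·B − B·η·A + Λ·(v wᵀ − w vᵀ))`. -/
noncomputable def grav3Bracket (Λ : ℝ)
    (X Y : (Fin 3 → ℝ) × Matrix (Fin 3) (Fin 3) ℝ) :
    (Fin 3 → ℝ) × Matrix (Fin 3) (Fin 3) ℝ :=
  ((X.2 * minkowski3).mulVec Y.1 - (Y.2 * minkowski3).mulVec X.1,
    X.2 * minkowski3 * Y.2 - Y.2 * minkowski3 * X.2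
      + Λ • (Matrix.vecMulVec X.1 Y.1 - Matrix.vecMulVec Y.1 X.1))

/-- The symmetric bilinear pairing
`⟨(v,A),(w,B)⟩ = ∑ ε_{abc} (A^{ab} w^c + B^{ab} v^c)` on pairs `(v, A)`. -/
noncomputable def grav3Pairing (X Y : (Fin 3 → ℝ) × Matrix (Fin 3) (Fin 3) ℝ) : ℝ :=
  ∑ a : Fin 3, ∑ b : Fin 3, ∑ c : Fin 3,
    levicivita a b c * (X.2 a b * Y.1 c + Y.2 a b * X.1 c)

set_option maxHeartbeats 4000000 in
/-- Invariance of the pairing: `⟨⟦X,Y⟧, Z⟩ = ⟨X, ⟦Y,Z⟧⟩` for all `X`, `Y`, `Z` with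
antisymmetric matrix components. -/
theorem grav3Pairing_invariant (Λ : ℝ)
    (X Y Z : (Fin 3 → ℝ) × Matrix (Fin 3) (Fin 3) ℝ)
    (hX : ∀ a b, X.2 a b = -X.2 b a) (hY : ∀ a b, Y.2 a b = -Y.2 b a)
    (hZ : ∀ a b, Z.2 a b = -Z.2 b a) :
    grav3Pairing (grav3Bracket Λ X Y) Z = grav3Pairing X (grav3Bracket Λ Y Z) := by
  obtain ⟨v, A⟩ := X; obtain ⟨w, B⟩ := Y; obtain ⟨u, C⟩ := Z
  simp only at hX hY hZ
  have hA0 : A 0 0 = 0 := by linarith [hX 0 0]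
  have hA1 : A 1 1 = 0 := by linarith [hX 1 1]
  have hA2 : A 2 2 = 0 := by linarith [hX 2 2]
  have hB0 : B 0 0 = 0 := by linarith [hY 0 0]
  have hB1 : B 1 1 = 0 := by linarith [hY 1 1]
  have hB2 : B 2 2 = 0 := by linarith [hY 2 2]
  have hC0 : C 0 0 = 0 := by linarith [hZ 0 0]
  have hC1 : C 1 1 = 0 := by linarith [hZ 1 1]
  have hC2 : C 2 2 = 0 := by linarith [hZ 2 2]
  simp only [grav3Pairing, grav3Bracket, minkowski3, levicivita,
    Fin.sum_univ_three, Matrix.mulVec, Matrix.mul_apply, Matrix.vecMulVec_apply,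
    dotProduct, Matrix.sub_apply, Matrix.add_apply, Matrix.smul_apply,
    Matrix.diagonal_apply, Pi.sub_apply, smul_eq_mul]
  norm_num [Matrix.cons_val_zero, Matrix.cons_val_one, Matrix.head_cons, Fin.ext_iff]
  rw [hX 1 0, hX 2 0, hX 2 1, hY 1 0, hY 2 0, hY 2 1, hZ 1 0, hZ 2 0, hZ 2 1,
    hA0, hA1, hA2, hB0, hB1, hB2, hC0, hC1, hC2]
  ring
end
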